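/- Let n ≥ 3 be odd, so that the bipyramid BP_n is z-knotted. Then every edge of BP_n joining a vertex of {a,b} to a vertex of {1,…,n} is of first type, and every edge of the n-gon (an edge {i, i+1 mod n}) is of second type. Consequently every face of BP_n is a (1,1,2)-face, its unique edge of second type being its n-gon edge. -/

import Mathlib

universe u v

/-- The data of an embedded graph: a simple graph together with a collection of
(triangular) faces, each face recorded as the finite set of its vertices. -/
structure PreTriangulation (V : Type u) where
  graph : SimpleGraph V
  faces : Set (Finset V)

namespace PreTriangulation

variable {V : Type u} {V' : Type v}

/-- `T` is a combinatorial triangulation: a finite simple connected graph together with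
a collection of faces, each face being a set of three pairwise adjacent vertices, such that
every edge lies in exactly two faces and two distinct faces share at most one edge. -/
structure IsTriangulation [DecidableEq V] (T : PreTriangulation V) : Prop where
  finiteVerts : Finite V
  connected : T.graph.Connected
  face_card : ∀ F ∈ T.faces, F.card = 3
  face_adj : ∀ F ∈ T.faces, ∀ x ∈ F, ∀ y ∈ F, x ≠ y → T.graph.Adj x y
  edge_in_two_faces : ∀ x y : V, T.graph.Adj x y →
    {F | F ∈ T.faces ∧ x ∈ F ∧ y ∈ F}.ncard = 2
  faces_share_at_most_one_edge :
    ∀ F ∈ T.faces, ∀ G ∈ T.faces, F ≠ G → (F ∩ G).card ≤ 2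

section

variable [DecidableEq V] [DecidableEq V']

/-- A zigzag in `T`: a cyclic sequence of vertices (encoded as a periodic function `ℤ → V`
whose minimal period `n` is the length of the zigzag, with `n > 3`) such that any two
consecutive vertices are distinct and adjacent, any three consecutive vertices lie in a
unique face, and the faces determined by two consecutive triples are distinct. -/
structure Zigzag (T : PreTriangulation V) where
  n : ℕ
  three_lt_n : 3 < n
  seq : ℤ → V
  periodic : ∀ i : ℤ, seq (i + n) = seq i
  n_minimal : ∀ m : ℕ, 0 < m → (∀ i : ℤ, seq (i + m) = seq i) → n ≤ m
  seq_ne : ∀ i : ℤ, seq i ≠ seq (i + 1)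
  seq_adj : ∀ i : ℤ, T.graph.Adj (seq i) (seq (i + 1))
  face : ℤ → Finset V
  face_mem : ∀ i : ℤ, face i ∈ T.faces
  subset_face : ∀ i : ℤ, ({seq i, seq (i + 1), seq (i + 2)} : Finset V) ⊆ face i
  face_unique : ∀ i : ℤ, ∀ G ∈ T.faces,
    ({seq i, seq (i + 1), seq (i + 2)} : Finset V) ⊆ G → G = face i
  face_ne : ∀ i : ℤ, face i ≠ face (i + 1)

variable {T : PreTriangulation V}

/-- Two zigzags are equivalent if they agree up to a cyclic shift or up to a cyclic
shift combined with reversal. -/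
def ZigzagEquiv (Z Z' : T.Zigzag) : Prop :=
  (∃ k : ℤ, ∀ i : ℤ, Z'.seq i = Z.seq (i + k)) ∨
  (∃ k : ℤ, ∀ i : ℤ, Z'.seq i = Z.seq (k - i))

/-- `T` is z-knotted: it has exactly one zigzag up to cyclic shift and reversal. -/
def ZKnotted (T : PreTriangulation V) [DecidableEq V] : Prop :=
  Nonempty T.Zigzag ∧ ∀ Z Z' : T.Zigzag, ZigzagEquiv Z Z'

/-- `T` has exactly two zigzags up to cyclic shift and reversal. -/
def HasExactlyTwoZigzags (T : PreTriangulation V) [DecidableEq V] : Prop :=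
  ∃ Z₁ Z₂ : T.Zigzag, ¬ ZigzagEquiv Z₁ Z₂ ∧
    ∀ Z : T.Zigzag, ZigzagEquiv Z Z₁ ∨ ZigzagEquiv Z Z₂

/-- `T` has exactly three zigzags up to cyclic shift and reversal. -/
def HasExactlyThreeZigzags (T : PreTriangulation V) [DecidableEq V] : Prop :=
  ∃ Z₁ Z₂ Z₃ : T.Zigzag, ¬ ZigzagEquiv Z₁ Z₂ ∧ ¬ ZigzagEquiv Z₁ Z₃ ∧ ¬ ZigzagEquiv Z₂ Z₃ ∧
    ∀ Z : T.Zigzag, ZigzagEquiv Z Z₁ ∨ ZigzagEquiv Z Z₂ ∨ ZigzagEquiv Z Z₃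

namespace Zigzag

/-- The zigzag passes from `x` to `y` (in this order) at some position. -/
def Passes (Z : T.Zigzag) (x y : V) : Prop :=
  ∃ i : ℤ, Z.seq i = x ∧ Z.seq (i + 1) = y

/-- The zigzag passes from `x` to `y` (in this order) at two distinct positions
of the cyclic sequence. -/
def PassesTwice (Z : T.Zigzag) (x y : V) : Prop :=
  ∃ i j : ℤ, (i : ZMod Z.n) ≠ (j : ZMod Z.n) ∧
    Z.seq i = x ∧ Z.seq (i + 1) = y ∧ Z.seq j = x ∧ Z.seq (j + 1) = y

/-- The edge `{x, y}` is of first type: the zigzag contains both `x, y` and `y, x`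
as pairs of consecutive vertices. -/
def FirstTypeEdge (Z : T.Zigzag) (x y : V) : Prop := Z.Passes x y ∧ Z.Passes y x

/-- The edge `{x, y}` is of second type: the zigzag contains the same ordered pair
(`x, y` or `y, x`) twice. -/
def SecondTypeEdge (Z : T.Zigzag) (x y : V) : Prop :=
  Z.PassesTwice x y ∨ Z.PassesTwice y x

/-- The number of positions of the cyclic sequence at which the pair of consecutive
vertices equals `{x, y}` (in either order). -/
noncomputable def passCount (Z : T.Zigzag) (x y : V) : ℕ :=
  Nat.card {i : Fin Z.n //
    (Z.seq ((i : ℕ) : ℤ) = x ∧ Z.seq (((i : ℕ) : ℤ) + 1) = y) ∨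
    (Z.seq ((i : ℕ) : ℤ) = y ∧ Z.seq (((i : ℕ) : ℤ) + 1) = x)}

/-- The number of positions of the cyclic sequence at which the triple of consecutive
vertices has vertex set equal to `F`. -/
noncomputable def faceCount (Z : T.Zigzag) (F : Finset V) : ℕ :=
  Nat.card {i : Fin Z.n //
    ({Z.seq ((i : ℕ) : ℤ), Z.seq (((i : ℕ) : ℤ) + 1), Z.seq (((i : ℕ) : ℤ) + 2)} :
      Finset V) = F}

/-- The three consecutive vertices of the zigzag at position `i` are `x, y, z`. -/
def TripleAt (Z : T.Zigzag) (i : ℤ) (x y z : V) : Prop :=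
  Z.seq i = x ∧ Z.seq (i + 1) = y ∧ Z.seq (i + 2) = z

/-- The zigzag has the cyclic form `x₁,y₁,z₁, …, x₂,y₂,z₂, …, x₃,y₃,z₃, …`:
the three triples occur in this cyclic order within one period. -/
def CyclicTriples (Z : T.Zigzag) (x₁ y₁ z₁ x₂ y₂ z₂ x₃ y₃ z₃ : V) : Prop :=
  ∃ (i : ℤ) (p q : ℕ), 0 < p ∧ p < q ∧ q < Z.n ∧
    Z.TripleAt i x₁ y₁ z₁ ∧ Z.TripleAt (i + p) x₂ y₂ z₂ ∧ Z.TripleAt (i + q) x₃ y₃ z₃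

/-- `F` is a `(1,1,2)`-face: exactly one of its three edges is of second type. -/
def Is112Face (Z : T.Zigzag) (F : Finset V) : Prop :=
  ∃ x y z : V, F = {x, y, z} ∧ x ≠ y ∧ x ≠ z ∧ y ≠ z ∧
    Z.SecondTypeEdge y z ∧ ¬ Z.SecondTypeEdge x y ∧ ¬ Z.SecondTypeEdge x z

/-- `F` is a `(2,2,2)`-face: all three of its edges are of second type. -/
def Is222Face (Z : T.Zigzag) (F : Finset V) : Prop :=
  ∃ x y z : V, F = {x, y, z} ∧ x ≠ y ∧ x ≠ z ∧ y ≠ z ∧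
    Z.SecondTypeEdge x y ∧ Z.SecondTypeEdge y z ∧ Z.SecondTypeEdge x z

/-- `F` is a `(1,1,2)`-face of odd type: with vertices `x, y, z`, where `{y, z}` is the
edge of second type and the zigzag twice passes from `y` to `z`, the zigzag has the
cyclic form `x,y,z, …, y,x,z, …, y,z,x, …`. -/
def Is112OddFace (Z : T.Zigzag) (F : Finset V) : Prop :=
  ∃ x y z : V, F = {x, y, z} ∧ x ≠ y ∧ x ≠ z ∧ y ≠ z ∧
    Z.SecondTypeEdge y z ∧ ¬ Z.SecondTypeEdge x y ∧ ¬ Z.SecondTypeEdge x z ∧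
    Z.PassesTwice y z ∧ Z.CyclicTriples x y z y x z y z x

/-- `F` is a `(1,1,2)`-face of even type: with vertices `x, y, z`, where `{y, z}` is the
edge of second type and the zigzag twice passes from `y` to `z`, the zigzag has the
cyclic form `x,y,z, …, y,z,x, …, y,x,z, …`. -/
def Is112EvenFace (Z : T.Zigzag) (F : Finset V) : Prop :=
  ∃ x y z : V, F = {x, y, z} ∧ x ≠ y ∧ x ≠ z ∧ y ≠ z ∧
    Z.SecondTypeEdge y z ∧ ¬ Z.SecondTypeEdge x y ∧ ¬ Z.SecondTypeEdge x z ∧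
    Z.PassesTwice y z ∧ Z.CyclicTriples x y z y z x y x z

/-- `F` is a `(2,2,2)`-face of first type: with vertices `x, y, z` such that the zigzag
twice passes from `x` to `y`, twice from `y` to `z` and twice from `z` to `x`, the
zigzag has the cyclic form `x,y,z, …, z,x,y, …, y,z,x, …`. -/
def Is222FirstFace (Z : T.Zigzag) (F : Finset V) : Prop :=
  ∃ x y z : V, F = {x, y, z} ∧ x ≠ y ∧ x ≠ z ∧ y ≠ z ∧
    Z.PassesTwice x y ∧ Z.PassesTwice y z ∧ Z.PassesTwice z x ∧
    Z.CyclicTriples x y z z x y y z x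

/-- `F` is a `(2,2,2)`-face of second type: with vertices `x, y, z` such that the zigzag
twice passes from `x` to `y`, twice from `y` to `z` and twice from `z` to `x`, the
zigzag has the cyclic form `x,y,z, …, y,z,x, …, z,x,y, …`. -/
def Is222SecondFace (Z : T.Zigzag) (F : Finset V) : Prop :=
  ∃ x y z : V, F = {x, y, z} ∧ x ≠ y ∧ x ≠ z ∧ y ≠ z ∧
    Z.PassesTwice x y ∧ Z.PassesTwice y z ∧ Z.PassesTwice z x ∧
    Z.CyclicTriples x y z y z x z x y

/-- `a` is the vertex of the face `F` which does not lie on an edge of `F` of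
second type. -/
def IsApex (Z : T.Zigzag) (F : Finset V) (a : V) : Prop :=
  a ∈ F ∧ ∀ y ∈ F, y ≠ a → ¬ Z.SecondTypeEdge a y

end Zigzag

end

section ConnectedSum

variable [DecidableEq V] [DecidableEq V']

/-- The map gluing `Γ'` onto `Γ`: a vertex of `F'` is sent to the corresponding
(under `g`) vertex of `F`, all other vertices of `Γ'` are kept. -/
noncomputable def glueMap [Nonempty V] (F : Finset V) (F' : Finset V') (g : V → V') (y : V') :
    V ⊕ {y : V' // y ∉ F'} :=
  if h : y ∈ F' then Sum.inl (Function.invFunOn g ↑F y) else Sum.inr ⟨y, h⟩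

/-- The connected sum `T #_g T'` of two triangulations along the faces `F` and `F'`,
via the identification `g` of the vertices of `F` with the vertices of `F'`:
the disjoint union of `T` and `T'` in which every vertex `v` of `F` is identified with
`g v` (and the edges of `F` are identified with the corresponding edges of `F'`),
whose faces are all faces of `T` other than `F` together with all faces of `T'`
other than `F'`. -/
noncomputable def connectedSum [Nonempty V] (T : PreTriangulation V) (T' : PreTriangulation V')
    (F : Finset V) (F' : Finset V') (g : V → V') :
    PreTriangulation (V ⊕ {y : V' // y ∉ F'}) where
  graph :=
    { Adj := fun u v => u ≠ v ∧
        ((∃ x y : V, T.graph.Adj x y ∧ u = Sum.inl x ∧ v = Sum.inl y) ∨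
         (∃ x y : V', T'.graph.Adj x y ∧ u = glueMap F F' g x ∧ v = glueMap F F' g y))
      symm := by
        constructor
        rintro u v ⟨hne, h⟩
        refine ⟨hne.symm, ?_⟩
        rcases h with ⟨x, y, hxy, hu, hv⟩ | ⟨x, y, hxy, hu, hv⟩
        · exact Or.inl ⟨y, x, hxy.symm, hv, hu⟩
        · exact Or.inr ⟨y, x, hxy.symm, hv, hu⟩
      loopless := ⟨fun u h => h.1 rfl⟩ }
  faces :=
    {G | (∃ A ∈ T.faces, A ≠ F ∧ G = A.image Sum.inl) ∨
         (∃ A ∈ T'.faces, A ≠ F' ∧ G = A.image (glueMap F F' g))}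

end ConnectedSum

/-- `T` and `T'` are isomorphic as graphs together with their collections of faces. -/
def IsIsoTo [DecidableEq V'] (T : PreTriangulation V) (T' : PreTriangulation V') : Prop :=
  ∃ e : V ≃ V', (∀ x y : V, T.graph.Adj x y ↔ T'.graph.Adj (e x) (e y)) ∧
    (∀ G : Finset V, G ∈ T.faces ↔ G.image e ∈ T'.faces)

/-- The bipyramid `BP n`.  The two apices `a, b` are `Sum.inl true, Sum.inl false`;
the vertices `1, …, n` of the `n`-gon are `Sum.inr 0, …, Sum.inr (n-1)` (that is, the
paper's vertex `i` is `Sum.inr (i - 1)`). -/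
def bp (n : ℕ) : PreTriangulation (Bool ⊕ ZMod n) where
  graph :=
    { Adj := fun u v =>
        match u, v with
        | Sum.inl _, Sum.inl _ => False
        | Sum.inl _, Sum.inr _ => True
        | Sum.inr _, Sum.inl _ => True
        | Sum.inr i, Sum.inr j => i ≠ j ∧ (j = i + 1 ∨ i = j + 1)
      symm := by
        constructor
        rintro (s | i) (t | j) h
        · exact h.elim
        · trivial
        · trivial
        · exact ⟨h.1.symm, h.2.symm⟩
      loopless := by
        constructor
        rintro (s | i) h
        · exact h
        · exact h.1 rfl }
  faces := {G | ∃ (s : Bool) (i : ZMod n), G = {Sum.inl s, Sum.inr i, Sum.inr (i + 1)}}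

/-- The complete graph on four vertices regarded as a combinatorial triangulation whose
faces are all four 3-element vertex subsets. -/
def k4 : PreTriangulation (Fin 4) where
  graph := ⊤
  faces := {G | G.card = 3}

/-- The cyclic sequence `a, 1+c, 2+c, b, 3+c, 4+c, …, a, n-1+c, n+c, b, 1+c, 2+c, a, 3+c, 4+c,
…, b, n-1+c, n+c` in the bipyramid `BP n` (for `n` even), of length `3 n`, written in the
paper's labels; `c` is an offset.  Here `a = Sum.inl true`, `b = Sum.inl false` and the
paper's vertex `i` is `Sum.inr (i - 1)`. -/
def bpZigSeq (n : ℕ) (c : ZMod n) : ℤ → Bool ⊕ ZMod n := fun i =>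
  let j : ℕ := (i % (3 * (n : ℤ))).toNat
  if j % 3 = 0 then Sum.inl (decide (j / 3 % 2 = 0))
  else Sum.inr (((2 * (j / 3) + (if j % 3 = 1 then 0 else 1) : ℕ) : ZMod n) + c)

end PreTriangulation

open PreTriangulation

/-!
Every face of `BP n` contains exactly one apex, and an edge lies in at most two faces, so a
zigzag is forced: once it reads an apex `s` followed by `m, m + e` (`e = ±1`) it continues
`s, m, m + e, s', m + 2e, m + 3e, s, m + 4e, …`, with `s'` the other apex. In block `k` of three
positions the apex is `s` or `s'` according to the parity of `k` and the `n`-gon vertices are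
`m + 2ke, m + (2k + 1)e`. For odd `n` the pair (parity of `k`, `k mod n`) determines `k` modulo
`2n` and takes every value, so the period is `6n`, each apex edge is passed exactly once in each
direction, while the `n`-gon edge `{m + 2ke, m + (2k + 1)e}` is passed in the same direction in the
blocks `k` and `k + n`.
-/

theorem Set.eq_of_mem_of_encard_le_two {α : Type*} {S : Set α} (hS : S.encard ≤ 2) {a b c : α}
    (ha : a ∈ S) (hb : b ∈ S) (hc : c ∈ S) (hab : a ≠ b) (hac : a ≠ c) : b = c := by
  by_contra hbc
  have h3 : ({a, b, c} : Set α).encard = 3 :=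
    Set.encard_eq_three.mpr ⟨a, b, c, hab, hac, hbc, rfl⟩
  have hle : ({a, b, c} : Set α).encard ≤ S.encard :=
    Set.encard_le_encard
      (Set.insert_subset ha (Set.insert_subset hb (Set.singleton_subset_iff.mpr hc)))
  exact absurd (h3 ▸ hle.trans hS : (3 : ℕ∞) ≤ 2) (by decide)

theorem Function.Periodic.eq_of_eqOn_Ici {α : Type*} {f g : ℤ → α} {a b : ℤ}
    (hf : Function.Periodic f a) (hg : Function.Periodic g b) (ha : 0 < a) (hb : 0 < b)
    (h : Set.EqOn f g (Set.Ici 0)) : f = g := by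
  funext x
  have hx : 0 ≤ x + |x| * b * a := by nlinarith [abs_nonneg x, neg_abs_le x, mul_pos ha hb]
  calc f x = f (x + |x| * b * a) := ((hf.int_mul (|x| * b)) x).symm
    _ = g (x + |x| * a * b) := by rw [h hx]; ring_nf
    _ = g x := (hg.int_mul (|x| * a)) x

theorem Int.exists_eq_three_mul_or (j : ℤ) :
    ∃ k, j = 3 * k ∨ j = 3 * k + 1 ∨ j = 3 * k + 2 :=
  ⟨j / 3, by omega⟩

theorem ZMod.one_ne_zero_of_three_le {n : ℕ} (h3 : 3 ≤ n) : (1 : ZMod n) ≠ 0 := by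
  have : Fact (1 < n) := ⟨by omega⟩
  exact one_ne_zero

theorem ZMod.two_ne_zero_of_three_le {n : ℕ} (h3 : 3 ≤ n) : (2 : ZMod n) ≠ 0 := by
  have : NeZero n := ⟨by omega⟩
  intro h
  have h2 : ((2 : ℕ) : ZMod n) = 0 := by exact_mod_cast h
  rw [ZMod.natCast_eq_zero_iff] at h2
  exact absurd (Nat.le_of_dvd two_pos h2) (by omega)

namespace PreTriangulation

section General

variable {V : Type*} [DecidableEq V] {T : PreTriangulation V}

def EdgeInAtMostTwoFaces (T : PreTriangulation V) : Prop :=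
  ∀ x y : V, T.graph.Adj x y → {F | F ∈ T.faces ∧ x ∈ F ∧ y ∈ F}.encard ≤ 2

namespace Zigzag

variable (Z : T.Zigzag)

theorem seq_ne_seq_add_two (i : ℤ) : Z.seq i ≠ Z.seq (i + 2) := by
  intro h
  -- otherwise the triple at `i` would also lie in `Z.face (i + 1)`
  have hsub := Z.subset_face (i + 1)
  rw [show i + 1 + 1 = i + 2 by ring, ← h] at hsub
  refine Z.face_ne i (Z.face_unique i _ (Z.face_mem (i + 1)) fun x hx => ?_).symm
  simp only [Finset.mem_insert, Finset.mem_singleton] at hx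
  rcases hx with rfl | rfl | rfl
  · exact hsub (by simp)
  · exact hsub (by simp)
  · exact h ▸ hsub (by simp)

theorem face_eq_of_card_le (i : ℤ) (h : (Z.face i).card ≤ 3) :
    Z.face i = {Z.seq i, Z.seq (i + 1), Z.seq (i + 2)} := by
  have hne : Z.seq (i + 1) ≠ Z.seq (i + 2) := by
    simpa only [show i + 1 + 1 = i + 2 by ring] using Z.seq_ne (i + 1)
  refine (Finset.eq_of_subset_of_card_le (Z.subset_face i) (h.trans ?_)).symm
  exact (Finset.card_eq_three.mpr ⟨_, _, _, Z.seq_ne i, Z.seq_ne_seq_add_two i, hne, rfl⟩).ge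

/-- `Z.face (i + 1)` is the face on the other side of the edge `{Z.seq (i + 1), Z.seq (i + 2)}`
from `Z.face i`. -/
theorem seq_add_three_eq (hT : T.EdgeInAtMostTwoFaces) (i : ℤ) {x : V}
    (hG : ({x, Z.seq (i + 1), Z.seq (i + 2)} : Finset V) ∈ T.faces) (hx : x ≠ Z.seq i) :
    Z.seq (i + 3) = x := by
  set G : Finset V := {x, Z.seq (i + 1), Z.seq (i + 2)}
  have hGi : Z.face i ≠ G := by
    intro h
    have hi : Z.seq i ∈ G := h ▸ Z.subset_face i (by simp)
    simp only [G, Finset.mem_insert, Finset.mem_singleton] at hi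
    rcases hi with h | h | h
    · exact hx h.symm
    · exact Z.seq_ne i h
    · exact Z.seq_ne_seq_add_two i h
  have hsub := Z.subset_face (i + 1)
  rw [show i + 1 + 1 = i + 2 by ring, show i + 1 + 2 = i + 3 by ring] at hsub
  have hadj := Z.seq_adj (i + 1)
  rw [show i + 1 + 1 = i + 2 by ring] at hadj
  have hface : Z.face (i + 1) = G :=
    Set.eq_of_mem_of_encard_le_two (hT _ _ hadj)
      ⟨Z.face_mem i, Z.subset_face i (by simp), Z.subset_face i (by simp)⟩
      ⟨Z.face_mem (i + 1), hsub (by simp), hsub (by simp)⟩ ⟨hG, by simp [G], by simp [G]⟩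
      (Z.face_ne i) hGi
  have h3 : Z.seq (i + 3) ∈ G := hface ▸ hsub (by simp)
  simp only [G, Finset.mem_insert, Finset.mem_singleton] at h3
  rcases h3 with h | h | h
  · exact h
  · exact absurd h.symm
      (by simpa only [show i + 1 + 2 = i + 3 by ring] using Z.seq_ne_seq_add_two (i + 1))
  · exact absurd h.symm (by simpa only [show i + 2 + 1 = i + 3 by ring] using Z.seq_ne (i + 2))

theorem seq_add_eq_of_recurrence (hT : T.EdgeInAtMostTwoFaces) {f : ℤ → V}
    (hface : ∀ j, ({f (j + 3), f (j + 1), f (j + 2)} : Finset V) ∈ T.faces)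
    (hne : ∀ j, f (j + 3) ≠ f j) {b : ℤ} (hb : 0 < b) (hper : Function.Periodic f b) {p : ℤ}
    (h0 : Z.seq p = f 0) (h1 : Z.seq (p + 1) = f 1) (h2 : Z.seq (p + 2) = f 2) (j : ℤ) :
    Z.seq (p + j) = f j := by
  have hnat (k : ℕ) : Z.seq (p + k) = f k ∧ Z.seq (p + k + 1) = f (k + 1) ∧
      Z.seq (p + k + 2) = f (k + 2) := by
    induction k with
    | zero => simpa using ⟨h0, h1, h2⟩
    | succ k ih =>
      obtain ⟨ih0, ih1, ih2⟩ := ih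
      have ih3 : Z.seq (p + k + 3) = f (k + 3) :=
        Z.seq_add_three_eq hT (p + k) (by rw [ih1, ih2]; exact hface k) (by rw [ih0]; exact hne k)
      refine ⟨?_, ?_, ?_⟩
      · convert ih1 using 2 <;> push_cast <;> ring
      · convert ih2 using 2 <;> push_cast <;> ring
      · convert ih3 using 2 <;> push_cast <;> ring
  have hZper : Function.Periodic (fun j => Z.seq (p + j)) Z.n := fun j => by
    simp only [← add_assoc, Z.periodic]
  have hn : (0 : ℤ) < Z.n := by have := Z.three_lt_n; omega
  refine congrFun (hZper.eq_of_eqOn_Ici hper hn hb fun j hj => ?_) j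
  lift j to ℕ using hj
  exact (hnat j).1

theorem passes_iff_of_seq_add_eq {f : ℤ → V} {p : ℤ} (hf : ∀ j, Z.seq (p + j) = f j)
    {x y : V} : Z.Passes x y ↔ ∃ j, f j = x ∧ f (j + 1) = y := by
  have hseq (i : ℤ) : Z.seq i = f (i - p) := by rw [← hf, add_sub_cancel]
  constructor
  · rintro ⟨i, h, h'⟩
    exact ⟨i - p, by rw [← hseq, h], by rw [sub_add_eq_add_sub, ← hseq, h']⟩
  · rintro ⟨j, h, h'⟩
    exact ⟨p + j, by rw [hf, h], by rw [add_assoc, hf, h']⟩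

theorem passesTwice_iff_of_seq_add_eq {f : ℤ → V} {p : ℤ} (hf : ∀ j, Z.seq (p + j) = f j)
    {x y : V} : Z.PassesTwice x y ↔ ∃ j j', ¬ (Z.n : ℤ) ∣ j' - j ∧
      f j = x ∧ f (j + 1) = y ∧ f j' = x ∧ f (j' + 1) = y := by
  have hseq (i : ℤ) : Z.seq i = f (i - p) := by rw [← hf, add_sub_cancel]
  simp only [PassesTwice, ne_eq, ZMod.intCast_eq_intCast_iff_dvd_sub]
  constructor
  · rintro ⟨i, i', hii', h, h', h'', h'''⟩
    refine ⟨i - p, i' - p, by rwa [sub_sub_sub_cancel_right], by rw [← hseq, h], ?_,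
      by rw [← hseq, h''], ?_⟩
    · rw [sub_add_eq_add_sub, ← hseq, h']
    · rw [sub_add_eq_add_sub, ← hseq, h''']
  · rintro ⟨j, j', hjj', h, h', h'', h'''⟩
    refine ⟨p + j, p + j', by rwa [add_sub_add_left_eq_sub], by rw [hf, h], ?_,
      by rw [hf, h''], ?_⟩
    · rw [add_assoc, hf, h']
    · rw [add_assoc, hf, h''']

end Zigzag

end General

variable {n : ℕ}

section Faces

theorem mem_bp_faces (t : Bool) (a : ZMod n) {e : ZMod n} (he : e = 1 ∨ e = -1) :
    ({.inl t, .inr a, .inr (a + e)} : Finset (Bool ⊕ ZMod n)) ∈ (bp n).faces := by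
  rcases he with rfl | rfl
  · exact ⟨t, a, rfl⟩
  · exact ⟨t, a + -1, by rw [Finset.pair_comm, neg_add_cancel_right]⟩

theorem card_le_three_of_mem_bp_faces {F : Finset (Bool ⊕ ZMod n)} (hF : F ∈ (bp n).faces) :
    F.card ≤ 3 := by
  obtain ⟨t, j, rfl⟩ := hF
  exact Finset.card_le_three

theorem eq_of_inl_mem_bp_face {F : Finset (Bool ⊕ ZMod n)} (hF : F ∈ (bp n).faces)
    {s t : Bool} (hs : .inl s ∈ F) (ht : .inl t ∈ F) : s = t := by
  obtain ⟨u, j, rfl⟩ := hF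
  simp only [Finset.mem_insert, Finset.mem_singleton, Sum.inl.injEq, reduceCtorEq,
    or_false] at hs ht
  rw [hs, ht]

theorem bp_faces_inl_inr_subset (s : Bool) (a : ZMod n) :
    {F | F ∈ (bp n).faces ∧ .inl s ∈ F ∧ .inr a ∈ F} ⊆
      {{.inl s, .inr a, .inr (a + 1)}, {.inl s, .inr (a - 1), .inr a}} := by
  rintro F ⟨⟨t, j, rfl⟩, hs, ha⟩
  simp only [Finset.mem_insert, Finset.mem_singleton, Sum.inl.injEq, Sum.inr.injEq,
    reduceCtorEq, or_false, false_or] at hs ha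
  subst hs
  rcases ha with rfl | rfl
  · exact Or.inl rfl
  · exact Or.inr (by rw [add_sub_cancel_right]; rfl)

theorem bp_faces_inr_inr_subset (h3 : 3 ≤ n) (a : ZMod n) :
    {F | F ∈ (bp n).faces ∧ .inr a ∈ F ∧ .inr (a + 1) ∈ F} ⊆
      {{.inl true, .inr a, .inr (a + 1)}, {.inl false, .inr a, .inr (a + 1)}} := by
  rintro F ⟨⟨t, j, rfl⟩, ha, ha'⟩
  simp only [Finset.mem_insert, Finset.mem_singleton, Sum.inr.injEq, reduceCtorEq,
    false_or] at ha ha'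
  obtain rfl : a = j := by
    rcases ha with ha | rfl
    · exact ha
    · rcases ha' with h | h
      · exact absurd (by linear_combination h) (ZMod.two_ne_zero_of_three_le h3)
      · exact absurd (by linear_combination h) (ZMod.one_ne_zero_of_three_le h3)
  cases t
  · exact Or.inr rfl
  · exact Or.inl rfl

theorem edgeInAtMostTwoFaces_bp (h3 : 3 ≤ n) : (bp n).EdgeInAtMostTwoFaces := by
  have pair_le {F G : Finset (Bool ⊕ ZMod n)} : ({F, G} : Set _).encard ≤ 2 :=
    (Set.encard_insert_le _ _).trans (by rw [Set.encard_singleton]; rfl)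
  have swap (x y : Bool ⊕ ZMod n) : {F | F ∈ (bp n).faces ∧ x ∈ F ∧ y ∈ F} =
      {F | F ∈ (bp n).faces ∧ y ∈ F ∧ x ∈ F} := by
    simp only [and_comm (a := x ∈ _)]
  rintro (s | a) (t | b) hadj
  · exact hadj.elim
  · exact (Set.encard_le_encard (bp_faces_inl_inr_subset s b)).trans pair_le
  · exact swap _ _ ▸ (Set.encard_le_encard (bp_faces_inl_inr_subset t a)).trans pair_le
  · rcases hadj.2 with rfl | rfl
    · exact (Set.encard_le_encard (bp_faces_inr_inr_subset h3 a)).trans pair_le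
    · exact swap _ _ ▸ (Set.encard_le_encard (bp_faces_inr_inr_subset h3 b)).trans pair_le

end Faces

def bpApex (s : Bool) (k : ℤ) : Bool := if k % 2 = 0 then s else !s

/-- The zigzag `s, m, m + e, !s, m + 2e, m + 3e, s, …` of `BP n`, indexed from `0`; here
`j - j / 3 - 1` is the number of `n`-gon positions in `[0, j)`. -/
def bpZig (s : Bool) (m e : ZMod n) (j : ℤ) : Bool ⊕ ZMod n :=
  if j % 3 = 0 then .inl (bpApex s (j / 3)) else .inr (m + ((j - j / 3 - 1 : ℤ) : ZMod n) * e)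

section bpZig

variable (s : Bool) (m e : ZMod n)

theorem bpApex_add_one (k : ℤ) : bpApex s (k + 1) = !bpApex s k := by
  by_cases hk : k % 2 = 0
  · simp [bpApex, hk, show ¬ (k + 1) % 2 = 0 by omega]
  · simp [bpApex, hk, show (k + 1) % 2 = 0 by omega]

theorem bpApex_add_two_mul (k l : ℤ) : bpApex s (k + 2 * l) = bpApex s k := by
  rw [bpApex, bpApex, show (k + 2 * l) % 2 = k % 2 by omega]

theorem emod_two_eq_of_bpApex_eq {k k' : ℤ} (h : bpApex s k = bpApex s k') : k % 2 = k' % 2 := by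
  unfold bpApex at h
  by_cases hk : k % 2 = 0 <;> by_cases hk' : k' % 2 = 0 <;> simp [hk, hk'] at h <;> omega

theorem bpZig_three_mul (k : ℤ) : bpZig s m e (3 * k) = .inl (bpApex s k) := by
  rw [bpZig, if_pos (by omega), show 3 * k / 3 = k by omega]

theorem bpZig_three_mul_add_one (k : ℤ) : bpZig s m e (3 * k + 1) = .inr (m + 2 * k * e) := by
  rw [bpZig, if_neg (by omega), show (3 * k + 1) / 3 = k by omega]
  push_cast
  ring_nf

theorem bpZig_three_mul_add_two (k : ℤ) :
    bpZig s m e (3 * k + 2) = .inr (m + (2 * k + 1) * e) := by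
  rw [bpZig, if_neg (by omega), show (3 * k + 2) / 3 = k by omega]
  push_cast
  ring_nf

theorem bpZig_periodic : Function.Periodic (bpZig s m e) (6 * n) := by
  have hcast (k : ℤ) : ((k + 2 * n : ℤ) : ZMod n) = k := by simp
  intro j
  obtain ⟨k, rfl | rfl | rfl⟩ := Int.exists_eq_three_mul_or j
  · rw [show 3 * k + 6 * n = 3 * (k + 2 * n) by ring, bpZig_three_mul, bpZig_three_mul,
      bpApex_add_two_mul]
  · rw [show 3 * k + 1 + 6 * n = 3 * (k + 2 * n) + 1 by ring, bpZig_three_mul_add_one,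
      bpZig_three_mul_add_one, hcast]
  · rw [show 3 * k + 2 + 6 * n = 3 * (k + 2 * n) + 2 by ring, bpZig_three_mul_add_two,
      bpZig_three_mul_add_two, hcast]

variable {e}

theorem bpZig_add_three_mem_faces (he : e = 1 ∨ e = -1) (j : ℤ) :
    ({bpZig s m e (j + 3), bpZig s m e (j + 1), bpZig s m e (j + 2)} :
      Finset (Bool ⊕ ZMod n)) ∈ (bp n).faces := by
  obtain ⟨k, rfl | rfl | rfl⟩ := Int.exists_eq_three_mul_or j
  · rw [show 3 * k + 3 = 3 * (k + 1) by ring, bpZig_three_mul, bpZig_three_mul_add_one,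
      bpZig_three_mul_add_two, show m + (2 * k + 1) * e = m + 2 * k * e + e by ring]
    exact mem_bp_faces _ _ he
  · rw [show 3 * k + 1 + 3 = 3 * (k + 1) + 1 by ring, show 3 * k + 1 + 1 = 3 * k + 2 by ring,
      show 3 * k + 1 + 2 = 3 * (k + 1) by ring, bpZig_three_mul, bpZig_three_mul_add_one,
      bpZig_three_mul_add_two]
    convert mem_bp_faces (bpApex s (k + 1)) (m + (2 * (k : ZMod n) + 1) * e) he using 1
    rw [show m + 2 * ((k + 1 : ℤ) : ZMod n) * e = m + (2 * k + 1) * e + e by push_cast; ring]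
    ext
    simp only [Finset.mem_insert, Finset.mem_singleton]
    tauto
  · rw [show 3 * k + 2 + 3 = 3 * (k + 1) + 2 by ring, show 3 * k + 2 + 1 = 3 * (k + 1) by ring,
      show 3 * k + 2 + 2 = 3 * (k + 1) + 1 by ring, bpZig_three_mul, bpZig_three_mul_add_one,
      bpZig_three_mul_add_two]
    convert mem_bp_faces (bpApex s (k + 1)) (m + 2 * ((k + 1 : ℤ) : ZMod n) * e) he using 1
    ext
    simp only [Finset.mem_insert, Finset.mem_singleton, add_mul, one_mul, add_assoc]
    tauto

theorem bpZig_add_three_ne (h3 : 3 ≤ n) (he : e = 1 ∨ e = -1) (j : ℤ) :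
    bpZig s m e (j + 3) ≠ bpZig s m e j := by
  have h2e : 2 * e ≠ 0 := by
    rcases he with rfl | rfl <;> simpa using ZMod.two_ne_zero_of_three_le h3
  obtain ⟨k, rfl | rfl | rfl⟩ := Int.exists_eq_three_mul_or j
  · rw [show 3 * k + 3 = 3 * (k + 1) by ring, bpZig_three_mul, bpZig_three_mul, bpApex_add_one]
    simp
  · rw [show 3 * k + 1 + 3 = 3 * (k + 1) + 1 by ring, bpZig_three_mul_add_one,
      bpZig_three_mul_add_one, ne_eq, Sum.inr.injEq]
    intro h
    exact h2e (by push_cast at h; linear_combination h)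
  · rw [show 3 * k + 2 + 3 = 3 * (k + 1) + 2 by ring, bpZig_three_mul_add_two,
      bpZig_three_mul_add_two, ne_eq, Sum.inr.injEq]
    intro h
    exact h2e (by push_cast at h; linear_combination h)

theorem bpZig_inl_inr_iff {j : ℤ} {t : Bool} {a : ZMod n} :
    bpZig s m e j = .inl t ∧ bpZig s m e (j + 1) = .inr a ↔
      ∃ k : ℤ, j = 3 * k ∧ bpApex s k = t ∧ 2 * (k : ZMod n) * e = a - m := by
  constructor
  · rintro ⟨hj, hj1⟩
    obtain ⟨k, rfl | rfl | rfl⟩ := Int.exists_eq_three_mul_or j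
    · rw [bpZig_three_mul] at hj
      rw [bpZig_three_mul_add_one] at hj1
      exact ⟨k, rfl, Sum.inl_injective hj, by rw [← Sum.inr_injective hj1]; ring⟩
    · simp [bpZig_three_mul_add_one] at hj
    · simp [bpZig_three_mul_add_two] at hj
  · rintro ⟨k, rfl, hkt, hka⟩
    rw [bpZig_three_mul, bpZig_three_mul_add_one, hkt, hka, add_sub_cancel]
    exact ⟨rfl, rfl⟩

theorem bpZig_inr_inl_iff {j : ℤ} {t : Bool} {a : ZMod n} :
    bpZig s m e j = .inr a ∧ bpZig s m e (j + 1) = .inl t ↔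
      ∃ k : ℤ, j = 3 * k - 1 ∧ bpApex s k = t ∧ 2 * (k : ZMod n) * e = a - m + e := by
  constructor
  · rintro ⟨hj, hj1⟩
    obtain ⟨k, rfl | rfl | rfl⟩ := Int.exists_eq_three_mul_or j
    · simp [bpZig_three_mul] at hj
    · simp [show 3 * k + 1 + 1 = 3 * k + 2 by ring, bpZig_three_mul_add_two] at hj1
    · rw [bpZig_three_mul_add_two] at hj
      rw [show 3 * k + 2 + 1 = 3 * (k + 1) by ring, bpZig_three_mul] at hj1
      refine ⟨k + 1, by ring, Sum.inl_injective hj1, ?_⟩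
      rw [← Sum.inr_injective hj]
      push_cast
      ring
  · rintro ⟨k, rfl, hkt, hka⟩
    rw [show 3 * k - 1 = 3 * (k - 1) + 2 by ring, bpZig_three_mul_add_two,
      show 3 * (k - 1) + 2 + 1 = 3 * k by ring, bpZig_three_mul, hkt]
    refine ⟨congrArg Sum.inr ?_, rfl⟩
    push_cast
    linear_combination hka

theorem bpZig_inr_inr_iff {j : ℤ} {a b : ZMod n} :
    bpZig s m e j = .inr a ∧ bpZig s m e (j + 1) = .inr b ↔
      ∃ k : ℤ, j = 3 * k + 1 ∧ 2 * (k : ZMod n) * e = a - m ∧ b = a + e := by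
  constructor
  · rintro ⟨hj, hj1⟩
    obtain ⟨k, rfl | rfl | rfl⟩ := Int.exists_eq_three_mul_or j
    · simp [bpZig_three_mul] at hj
    · rw [bpZig_three_mul_add_one] at hj
      rw [show 3 * k + 1 + 1 = 3 * k + 2 by ring, bpZig_three_mul_add_two] at hj1
      refine ⟨k, rfl, by rw [← Sum.inr_injective hj]; ring, ?_⟩
      rw [← Sum.inr_injective hj, ← Sum.inr_injective hj1]
      ring
    · simp [show 3 * k + 2 + 1 = 3 * (k + 1) by ring, bpZig_three_mul] at hj1
  · rintro ⟨k, rfl, hka, rfl⟩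
    rw [bpZig_three_mul_add_one, show 3 * k + 1 + 1 = 3 * k + 2 by ring, bpZig_three_mul_add_two]
    refine ⟨congrArg Sum.inr (by linear_combination hka), congrArg Sum.inr ?_⟩
    linear_combination hka

theorem isUnit_two_mul (ho : Odd n) (he : e = 1 ∨ e = -1) : IsUnit (2 * e) := by
  have h2 : IsUnit (2 : ZMod n) := by
    exact_mod_cast (ZMod.isUnit_iff_coprime 2 n).mpr (Nat.coprime_two_left.mpr ho)
  rcases he with rfl | rfl
  exacts [h2.mul isUnit_one, h2.mul isUnit_one.neg]

theorem exists_bpApex_eq_and_two_mul_eq (ho : Odd n) (he : e = 1 ∨ e = -1) (t : Bool)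
    (c : ZMod n) : ∃ k : ℤ, bpApex s k = t ∧ 2 * (k : ZMod n) * e = c := by
  set u := (isUnit_two_mul ho he).unit
  obtain ⟨k₀, hk₀⟩ := ZMod.intCast_surjective (((u⁻¹ : (ZMod n)ˣ) : ZMod n) * c)
  have hval (k : ℤ) (hk : (k : ZMod n) = k₀) : 2 * (k : ZMod n) * e = c := by
    rw [hk, hk₀, show 2 * (↑u⁻¹ * c) * e = (2 * e) * ↑u⁻¹ * c by ring,
      ← (isUnit_two_mul ho he).unit_spec, Units.mul_inv, one_mul]
  by_cases h : bpApex s k₀ = t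
  · exact ⟨k₀, h, hval k₀ rfl⟩
  -- `k₀ + n` has the same residue as `k₀` modulo `n` and the opposite parity
  obtain ⟨r, hr⟩ := ho
  refine ⟨k₀ + n, ?_, hval _ (by simp)⟩
  rw [hr, Nat.cast_add, Nat.cast_mul, Nat.cast_one, ← add_assoc, Nat.cast_two, bpApex_add_one,
    bpApex_add_two_mul]
  exact (Bool.eq_not.mpr (Ne.symm h)).symm

theorem two_mul_dvd_sub_of_bpApex_eq (ho : Odd n) (he : e = 1 ∨ e = -1) {k k' : ℤ}
    (ht : bpApex s k = bpApex s k') (hc : 2 * (k : ZMod n) * e = 2 * (k' : ZMod n) * e) :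
    2 * (n : ℤ) ∣ k' - k := by
  have hpar := emod_two_eq_of_bpApex_eq s ht
  have hmod : (k : ZMod n) = k' :=
    (isUnit_two_mul ho he).mul_left_cancel (by linear_combination hc)
  rw [ZMod.intCast_eq_intCast_iff_dvd_sub] at hmod
  have hcop : IsCoprime (2 : ℤ) n := by
    exact_mod_cast Nat.isCoprime_iff_coprime.mpr (Nat.coprime_two_left.mpr ho)
  exact hcop.mul_dvd (by omega) hmod

theorem six_mul_dvd_sub_of_bpZig_inl_inr (ho : Odd n) (he : e = 1 ∨ e = -1) {j j' : ℤ}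
    {t : Bool} {a : ZMod n} (hj : bpZig s m e j = .inl t ∧ bpZig s m e (j + 1) = .inr a)
    (hj' : bpZig s m e j' = .inl t ∧ bpZig s m e (j' + 1) = .inr a) :
    6 * (n : ℤ) ∣ j' - j := by
  obtain ⟨k, rfl, hkt, hka⟩ := (bpZig_inl_inr_iff s m).mp hj
  obtain ⟨k', rfl, hkt', hka'⟩ := (bpZig_inl_inr_iff s m).mp hj'
  obtain ⟨c, hc⟩ :=
    two_mul_dvd_sub_of_bpApex_eq s ho he (hkt.trans hkt'.symm) (hka.trans hka'.symm)
  exact ⟨c, by linear_combination 3 * hc⟩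

theorem six_mul_dvd_sub_of_bpZig_inr_inl (ho : Odd n) (he : e = 1 ∨ e = -1) {j j' : ℤ}
    {t : Bool} {a : ZMod n} (hj : bpZig s m e j = .inr a ∧ bpZig s m e (j + 1) = .inl t)
    (hj' : bpZig s m e j' = .inr a ∧ bpZig s m e (j' + 1) = .inl t) :
    6 * (n : ℤ) ∣ j' - j := by
  obtain ⟨k, rfl, hkt, hka⟩ := (bpZig_inr_inl_iff s m).mp hj
  obtain ⟨k', rfl, hkt', hka'⟩ := (bpZig_inr_inl_iff s m).mp hj'
  obtain ⟨c, hc⟩ :=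
    two_mul_dvd_sub_of_bpApex_eq s ho he (hkt.trans hkt'.symm) (hka.trans hka'.symm)
  exact ⟨c, by linear_combination 3 * hc⟩

end bpZig

namespace Zigzag

section Start

variable (Z : (bp n).Zigzag)

theorem exists_seq_eq_inl : ∃ p s, Z.seq p = .inl s := by
  obtain ⟨t, j, hF⟩ := Z.face_mem 0
  have ht : (.inl t : Bool ⊕ ZMod n) ∈ Z.face 0 := by rw [hF]; simp
  rw [Z.face_eq_of_card_le 0 (card_le_three_of_mem_bp_faces (Z.face_mem 0))] at ht
  simp only [Finset.mem_insert, Finset.mem_singleton] at ht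
  rcases ht with h | h | h
  exacts [⟨0, t, h.symm⟩, ⟨0 + 1, t, h.symm⟩, ⟨0 + 2, t, h.symm⟩]

theorem exists_seq_eq_inl_inr_inr : ∃ p s m e, (e = 1 ∨ e = -1) ∧
    Z.seq p = .inl s ∧ Z.seq (p + 1) = .inr m ∧ Z.seq (p + 2) = .inr (m + e) := by
  obtain ⟨p, s, hp⟩ := Z.exists_seq_eq_inl
  have hadj1 := Z.seq_adj p
  have hadj2 := Z.seq_adj (p + 1)
  rw [show p + 1 + 1 = p + 2 by ring] at hadj2
  rcases h1 : Z.seq (p + 1) with t | m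
  · rw [hp, h1] at hadj1
    exact hadj1.elim
  rcases h2 : Z.seq (p + 2) with t | b
  · have hs : Z.seq p ∈ Z.face p := Z.subset_face p (by simp)
    have ht : Z.seq (p + 2) ∈ Z.face p := Z.subset_face p (by simp)
    rw [hp] at hs
    rw [h2] at ht
    refine absurd ?_ (Z.seq_ne_seq_add_two p)
    rw [hp, h2, eq_of_inl_mem_bp_face (Z.face_mem p) hs ht]
  · rw [h1, h2] at hadj2
    rcases hadj2.2 with rfl | rfl
    · exact ⟨p, s, m, 1, Or.inl rfl, hp, h1, h2⟩
    · exact ⟨p, s, b + 1, -1, Or.inr rfl, hp, h1, by rw [h2, add_neg_cancel_right]⟩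

theorem exists_seq_add_eq_bpZig (h3 : 3 ≤ n) :
    ∃ p s m e, (e = 1 ∨ e = -1) ∧ ∀ j, Z.seq (p + j) = bpZig s m e j := by
  obtain ⟨p, s, m, e, he, h0, h1, h2⟩ := Z.exists_seq_eq_inl_inr_inr
  refine ⟨p, s, m, e, he, Z.seq_add_eq_of_recurrence (edgeInAtMostTwoFaces_bp h3)
    (bpZig_add_three_mem_faces s m he) (bpZig_add_three_ne s m h3 he) (by omega)
    (bpZig_periodic s m e) ?_ ?_ ?_⟩
  · simpa [h0, bpApex] using (bpZig_three_mul s m e 0).symm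
  · simpa [h1] using (bpZig_three_mul_add_one s m e 0).symm
  · simpa [h2] using (bpZig_three_mul_add_two s m e 0).symm

end Start

variable {s : Bool} {m e : ZMod n} {Z : (bp n).Zigzag} {p : ℤ}
  (hf : ∀ j, Z.seq (p + j) = bpZig s m e j)
include hf

theorem n_eq_six_mul (ho : Odd n) (he : e = 1 ∨ e = -1) : Z.n = 6 * n := by
  have hseq (i : ℤ) : Z.seq i = bpZig s m e (i - p) := by rw [← hf, add_sub_cancel]
  apply le_antisymm
  · refine Z.n_minimal _ (by have := ho.pos; omega) fun i => ?_
    rw [hseq, hseq, show i + ((6 * n : ℕ) : ℤ) - p = i - p + 6 * n by push_cast; ring,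
      bpZig_periodic]
  · have h0 : bpZig s m e 0 = .inl s ∧ bpZig s m e (0 + 1) = .inr m := by
      simpa using (bpZig_inl_inr_iff s m).mpr ⟨0, rfl, by simp [bpApex], by simp⟩
    have hn : bpZig s m e Z.n = .inl s ∧ bpZig s m e (Z.n + 1) = .inr m := by
      rw [← hf, ← hf, add_zero, zero_add] at h0
      rw [← hf, ← hf, ← add_assoc, Z.periodic, add_right_comm, Z.periodic]
      exact h0
    have := Int.le_of_dvd (by have := Z.three_lt_n; omega)
      (six_mul_dvd_sub_of_bpZig_inl_inr s m ho he h0 hn)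
    omega

theorem firstTypeEdge_inl_inr (ho : Odd n) (he : e = 1 ∨ e = -1) (t : Bool) (a : ZMod n) :
    Z.FirstTypeEdge (.inl t) (.inr a) := by
  refine ⟨(Z.passes_iff_of_seq_add_eq hf).mpr ?_, (Z.passes_iff_of_seq_add_eq hf).mpr ?_⟩
  · obtain ⟨k, hkt, hka⟩ := exists_bpApex_eq_and_two_mul_eq s ho he t (a - m)
    exact ⟨3 * k, (bpZig_inl_inr_iff s m).mpr ⟨k, rfl, hkt, hka⟩⟩
  · obtain ⟨k, hkt, hka⟩ := exists_bpApex_eq_and_two_mul_eq s ho he t (a - m + e)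
    exact ⟨3 * k - 1, (bpZig_inr_inl_iff s m).mpr ⟨k, rfl, hkt, hka⟩⟩

theorem not_secondTypeEdge_inl_inr (ho : Odd n) (he : e = 1 ∨ e = -1) (t : Bool) (a : ZMod n) :
    ¬ Z.SecondTypeEdge (.inl t) (.inr a) := by
  rw [SecondTypeEdge, Z.passesTwice_iff_of_seq_add_eq hf, Z.passesTwice_iff_of_seq_add_eq hf,
    n_eq_six_mul hf ho he]
  push_cast
  rintro (⟨j, j', hjj', h⟩ | ⟨j, j', hjj', h⟩)
  · exact hjj' (six_mul_dvd_sub_of_bpZig_inl_inr s m ho he ⟨h.1, h.2.1⟩ h.2.2)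
  · exact hjj' (six_mul_dvd_sub_of_bpZig_inr_inl s m ho he ⟨h.1, h.2.1⟩ h.2.2)

theorem passesTwice_inr_inr (ho : Odd n) (he : e = 1 ∨ e = -1) (a : ZMod n) :
    Z.PassesTwice (.inr a) (.inr (a + e)) := by
  obtain ⟨k, -, hk⟩ := exists_bpApex_eq_and_two_mul_eq s ho he s (a - m)
  have hkn : 2 * ((k + n : ℤ) : ZMod n) * e = a - m := by simpa using hk
  obtain ⟨h1, h2⟩ := (bpZig_inr_inr_iff s m).mpr ⟨k, rfl, hk, rfl⟩
  obtain ⟨h3, h4⟩ := (bpZig_inr_inr_iff s m).mpr ⟨k + n, rfl, hkn, rfl⟩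
  refine (Z.passesTwice_iff_of_seq_add_eq hf).mpr ⟨_, _, ?_, h1, h2, h3, h4⟩
  rw [n_eq_six_mul hf ho he, show 3 * (k + n) + 1 - (3 * k + 1) = 3 * (n : ℤ) by ring]
  have hn := ho.pos
  intro h
  have := Int.le_of_dvd (by omega) h
  omega

theorem secondTypeEdge_inr_inr (ho : Odd n) (he : e = 1 ∨ e = -1) (a : ZMod n) :
    Z.SecondTypeEdge (.inr a) (.inr (a + 1)) := by
  rcases he with rfl | rfl
  · exact Or.inl (passesTwice_inr_inr hf ho (Or.inl rfl) a)
  · exact Or.inr (by simpa using passesTwice_inr_inr hf ho (Or.inr rfl) (a + 1))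

theorem not_firstTypeEdge_inr_inr (h3 : 3 ≤ n) (a : ZMod n) :
    ¬ Z.FirstTypeEdge (.inr a) (.inr (a + 1)) := by
  rintro ⟨h, h'⟩
  obtain ⟨j, hj⟩ := (Z.passes_iff_of_seq_add_eq hf).mp h
  obtain ⟨j', hj'⟩ := (Z.passes_iff_of_seq_add_eq hf).mp h'
  obtain ⟨-, -, -, he⟩ := (bpZig_inr_inr_iff s m).mp hj
  obtain ⟨-, -, -, he'⟩ := (bpZig_inr_inr_iff s m).mp hj'
  exact ZMod.two_ne_zero_of_three_le h3 (by linear_combination he - he')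

end Zigzag

end PreTriangulation

theorem statement_6 (n : ℕ) (h3 : 3 ≤ n) (ho : Odd n) (Z : (bp n).Zigzag) :
    (∀ (s : Bool) (i : ZMod n),
      Z.FirstTypeEdge (Sum.inl s) (Sum.inr i) ∧
      ¬ Z.SecondTypeEdge (Sum.inl s) (Sum.inr i)) ∧
    (∀ i : ZMod n,
      Z.SecondTypeEdge (Sum.inr i) (Sum.inr (i + 1)) ∧
      ¬ Z.FirstTypeEdge (Sum.inr i) (Sum.inr (i + 1))) ∧
    (∀ F ∈ (bp n).faces, Z.Is112Face F ∧ ∃ (s : Bool) (i : ZMod n),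
      F = {Sum.inl s, Sum.inr i, Sum.inr (i + 1)} ∧
      Z.SecondTypeEdge (Sum.inr i) (Sum.inr (i + 1)) ∧
      ¬ Z.SecondTypeEdge (Sum.inl s) (Sum.inr i) ∧
      ¬ Z.SecondTypeEdge (Sum.inl s) (Sum.inr (i + 1))) := by
  obtain ⟨p, s, m, e, he, hf⟩ := Z.exists_seq_add_eq_bpZig h3
  have apex_edge (t : Bool) (a : ZMod n) :
      Z.FirstTypeEdge (.inl t) (.inr a) ∧ ¬ Z.SecondTypeEdge (.inl t) (.inr a) :=
    ⟨Zigzag.firstTypeEdge_inl_inr hf ho he t a, Zigzag.not_secondTypeEdge_inl_inr hf ho he t a⟩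
  have ngon_edge (a : ZMod n) :
      Z.SecondTypeEdge (.inr a) (.inr (a + 1)) ∧ ¬ Z.FirstTypeEdge (.inr a) (.inr (a + 1)) :=
    ⟨Zigzag.secondTypeEdge_inr_inr hf ho he a, Zigzag.not_firstTypeEdge_inr_inr hf h3 a⟩
  refine ⟨apex_edge, ngon_edge, ?_⟩
  rintro F ⟨t, a, rfl⟩
  have hne : (.inr a : Bool ⊕ ZMod n) ≠ .inr (a + 1) := by
    simpa using ZMod.one_ne_zero_of_three_le h3
  exact ⟨⟨.inl t, .inr a, .inr (a + 1), rfl, by simp, by simp, hne, (ngon_edge a).1,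
    (apex_edge t a).2, (apex_edge t (a + 1)).2⟩,
    t, a, rfl, (ngon_edge a).1, (apex_edge t a).2, (apex_edge t (a + 1)).2⟩
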